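/- In the polynomial ring ℤ[y₁, y₂] graded by deg yᵢ = i, let A be the subring ℤ[y₁² - y₂, y₁y₂]. Then ℤ[y₁,y₂] is a free A-module with basis {1, y₁, y₁²}; in particular y₁³ = y₁·y₂ + y₁·(y₁² - y₂) and every element of ℤ[y₁,y₂] is uniquely expressible as a₀ + a₁y₁ + a₂y₁² with aᵢ ∈ A. -/
import Mathlib

open MvPolynomial

/-- `y₁ = CH¹(BGL₂)`-generator. -/
noncomputable def y₁ : MvPolynomial (Fin 2) ℤ := X 0
/-- `y₂ = CH²(BGL₂)`-generator. -/
noncomputable def y₂ : MvPolynomial (Fin 2) ℤ := X 1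

namespace BGL2aux

noncomputable def AA : Subalgebra ℤ (MvPolynomial (Fin 2) ℤ) :=
  Algebra.adjoin ℤ ({y₁ ^ 2 - y₂, y₁ * y₂} : Set (MvPolynomial (Fin 2) ℤ))

lemma pp_mem : (y₁ ^ 2 - y₂) ∈ AA := Algebra.subset_adjoin (Set.mem_insert _ _)
lemma qq_mem : (y₁ * y₂) ∈ AA :=
  Algebra.subset_adjoin (Set.mem_insert_of_mem _ rfl)

lemma C_mem (r : ℤ) : (C r : MvPolynomial (Fin 2) ℤ) ∈ AA := by
  rw [← MvPolynomial.algebraMap_eq]; exact Subalgebra.algebraMap_mem _ r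

lemma exists_repr (f : MvPolynomial (Fin 2) ℤ) :
    ∃ a : Fin 3 → MvPolynomial (Fin 2) ℤ, (∀ i, a i ∈ AA) ∧
      f = ∑ i : Fin 3, a i * y₁ ^ (i : ℕ) := by
  induction f using MvPolynomial.induction_on with
  | C r =>
      refine ⟨![C r, 0, 0], ?_, ?_⟩
      · intro i; fin_cases i
        · exact C_mem r
        · exact zero_mem _
        · exact zero_mem _
      · simp [Fin.sum_univ_three]
  | add f g hf hg =>
      obtain ⟨a, ha, hfa⟩ := hf
      obtain ⟨b, hb, hgb⟩ := hg
      refine ⟨a + b, fun i => add_mem (ha i) (hb i), ?_⟩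
      simp only [Pi.add_apply, add_mul, Finset.sum_add_distrib, hfa, hgb]
  | mul_X f i hf =>
      obtain ⟨a, ha, hfa⟩ := hf
      fin_cases i
      · refine ⟨![(y₁ * y₂) * a 2, a 0 + (y₁ ^ 2 - y₂) * a 2, a 1], ?_, ?_⟩
        · intro i; fin_cases i <;>
            simp only [Matrix.cons_val_zero, Matrix.cons_val_one, Matrix.head_cons,
              Matrix.cons_val_two, Matrix.tail_cons]
          · exact mul_mem qq_mem (ha 2)
          · exact add_mem (ha 0) (mul_mem pp_mem (ha 2))
          · exact ha 1
        · rw [hfa]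
          show _ * y₁ = _
          simp only [Fin.sum_univ_three, Matrix.cons_val_zero, Matrix.cons_val_one,
            Matrix.head_cons, Matrix.cons_val_two, Matrix.tail_cons, Fin.val_zero,
            Fin.val_one, Fin.val_two, pow_zero, pow_one, mul_one]
          ring
      · refine ⟨![(y₁ * y₂) * a 1 - (y₁ ^ 2 - y₂) * a 0, (y₁ * y₂) * a 2, a 0], ?_, ?_⟩
        · intro i; fin_cases i <;>
            simp only [Matrix.cons_val_zero, Matrix.cons_val_one, Matrix.head_cons,
              Matrix.cons_val_two, Matrix.tail_cons]
          · exact sub_mem (mul_mem qq_mem (ha 1)) (mul_mem pp_mem (ha 0))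
          · exact mul_mem qq_mem (ha 2)
          · exact ha 0
        · rw [hfa]
          show _ * y₂ = _
          simp only [Fin.sum_univ_three, Matrix.cons_val_zero, Matrix.cons_val_one,
            Matrix.head_cons, Matrix.cons_val_two, Matrix.tail_cons, Fin.val_zero,
            Fin.val_one, Fin.val_two, pow_zero, pow_one, mul_one]
          simp only [y₁, y₂]
          ring


noncomputable def φ₁ : MvPolynomial (Fin 2) ℤ →ₐ[ℤ] MvPolynomial (Fin 2) ℤ :=
  (symmetricSubalgebra (Fin 2) ℤ).val.comp (esymmAlgHom (Fin 2) ℤ 2)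

noncomputable def φ₂ : MvPolynomial (Fin 2) ℤ →ₐ[ℤ] MvPolynomial (Fin 2) ℤ :=
  aeval ![-(X 0), -(X 0 * X 1) - X 1 ^ 2]

noncomputable def φ₃ : MvPolynomial (Fin 2) ℤ →ₐ[ℤ] MvPolynomial (Fin 2) ℤ :=
  aeval ![-(X 1), -(X 0 * X 1) - X 0 ^ 2]

lemma esymm_two : esymm (Fin 2) ℤ 2 = X 0 * X 1 := by
  rw [esymm, show (Finset.powersetCard 2 (Finset.univ : Finset (Fin 2))) = {Finset.univ} by decide,
    Finset.sum_singleton, Fin.prod_univ_two]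

lemma φ₁_y₁ : φ₁ y₁ = X 0 + X 1 := by
  show ((esymmAlgHom (Fin 2) ℤ 2) y₁ : MvPolynomial (Fin 2) ℤ) = _
  rw [y₁, esymmAlgHom_apply, aeval_X]
  norm_num [esymm_one, Fin.sum_univ_two]

lemma φ₁_y₂ : φ₁ y₂ = X 0 * X 1 := by
  show ((esymmAlgHom (Fin 2) ℤ 2) y₂ : MvPolynomial (Fin 2) ℤ) = _
  rw [y₂, esymmAlgHom_apply, aeval_X]
  norm_num [esymm_two]

lemma φ₂_y₁ : φ₂ y₁ = -(X 0) := by simp [φ₂, y₁]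
lemma φ₂_y₂ : φ₂ y₂ = -(X 0 * X 1) - X 1 ^ 2 := by simp [φ₂, y₂]
lemma φ₃_y₁ : φ₃ y₁ = -(X 1) := by simp [φ₃, y₁]
lemma φ₃_y₂ : φ₃ y₂ = -(X 0 * X 1) - X 0 ^ 2 := by simp [φ₃, y₂]

lemma agree {ψ : MvPolynomial (Fin 2) ℤ →ₐ[ℤ] MvPolynomial (Fin 2) ℤ}
    (h1 : ψ (y₁ ^ 2 - y₂) = φ₁ (y₁ ^ 2 - y₂)) (h2 : ψ (y₁ * y₂) = φ₁ (y₁ * y₂))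
    {x : MvPolynomial (Fin 2) ℤ} (hx : x ∈ AA) : ψ x = φ₁ x := by
  induction hx using Algebra.adjoin_induction with
  | mem x hx => rcases hx with rfl | hx
                · exact h1
                · rw [Set.mem_singleton_iff] at hx; rw [hx]; exact h2
  | algebraMap r => rw [AlgHom.commutes, AlgHom.commutes]
  | add x y hx hy ihx ihy => rw [map_add, map_add, ihx, ihy]
  | mul x y hx hy ihx ihy => rw [map_mul, map_mul, ihx, ihy]

lemma agree₂ {x : MvPolynomial (Fin 2) ℤ} (hx : x ∈ AA) : φ₂ x = φ₁ x := by
  refine agree ?_ ?_ hx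
  · rw [map_sub, map_pow, φ₂_y₁, φ₂_y₂, map_sub, map_pow, φ₁_y₁, φ₁_y₂]; ring
  · rw [map_mul, φ₂_y₁, φ₂_y₂, map_mul, φ₁_y₁, φ₁_y₂]; ring

lemma agree₃ {x : MvPolynomial (Fin 2) ℤ} (hx : x ∈ AA) : φ₃ x = φ₁ x := by
  refine agree ?_ ?_ hx
  · rw [map_sub, map_pow, φ₃_y₁, φ₃_y₂, map_sub, map_pow, φ₁_y₁, φ₁_y₂]; ring
  · rw [map_mul, φ₃_y₁, φ₃_y₂, map_mul, φ₁_y₁, φ₁_y₂]; ring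

lemma repr_zero (c : Fin 3 → MvPolynomial (Fin 2) ℤ) (hc : ∀ i, c i ∈ AA)
    (h : ∑ i : Fin 3, c i * y₁ ^ (i : ℕ) = 0) : ∀ i, c i = 0 := by
  have E1 := congrArg φ₁ h
  have E2 := congrArg φ₂ h
  have E3 := congrArg φ₃ h
  simp only [map_sum, map_add, map_mul, map_pow, map_zero, Fin.sum_univ_three, Fin.val_zero,
    Fin.val_one, Fin.val_two, pow_zero, pow_one, mul_one, φ₁_y₁, φ₂_y₁, φ₃_y₁,
    agree₂ (hc 0), agree₂ (hc 1), agree₂ (hc 2),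
    agree₃ (hc 0), agree₃ (hc 1), agree₃ (hc 2)] at E1 E2 E3
  set b : Fin 3 → MvPolynomial (Fin 2) ℤ := fun i => φ₁ (c i) with hb
  have n1 : (2 * X 0 + X 1 : MvPolynomial (Fin 2) ℤ) ≠ 0 := by
    intro hcon
    have := congrArg (eval ![1, 0]) hcon
    simp at this
  have n2 : (X 0 + 2 * X 1 : MvPolynomial (Fin 2) ℤ) ≠ 0 := by
    intro hcon
    have := congrArg (eval ![0, 1]) hcon
    simp at this
  have n3 : (X 1 - X 0 : MvPolynomial (Fin 2) ℤ) ≠ 0 := by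
    intro hcon
    have := congrArg (eval ![0, 1]) hcon
    simp at this
  have g2 : b 1 + b 2 * X 1 = 0 := by
    have h12 : (b 1 + b 2 * X 1) * (2 * X 0 + X 1) = 0 := by linear_combination E1 - E2
    exact (mul_eq_zero.mp h12).resolve_right n1
  have g3 : b 1 + b 2 * X 0 = 0 := by
    have h13 : (b 1 + b 2 * X 0) * (X 0 + 2 * X 1) = 0 := by linear_combination E1 - E3
    exact (mul_eq_zero.mp h13).resolve_right n2
  have hb2 : b 2 = 0 := by
    have h23 : b 2 * (X 1 - X 0) = 0 := by linear_combination g2 - g3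
    exact (mul_eq_zero.mp h23).resolve_right n3
  have hb1 : b 1 = 0 := by linear_combination g3 - X 0 * hb2
  have hb0 : b 0 = 0 := by
    linear_combination E1 - (X 0 + X 1) * hb1 - (X 0 + X 1) ^ 2 * hb2
  intro i
  have hφ : φ₁ (c i) = 0 := by fin_cases i <;> assumption
  have hE : esymmAlgHom (Fin 2) ℤ 2 (c i) = 0 := by
    apply Subtype.ext
    rw [ZeroMemClass.coe_zero]
    exact hφ
  have := esymmAlgHom_fin_injective ℤ (le_refl 2) (by rw [hE, map_zero] : esymmAlgHom (Fin 2) ℤ 2 (c i) = esymmAlgHom (Fin 2) ℤ 2 0)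
  exact this

end BGL2aux

open BGL2aux in
/-- In `ℤ[y₁,y₂]`, with `A = ℤ[y₁² - y₂, y₁y₂]`, the ring `ℤ[y₁,y₂]` is a free `A`-module
with basis `{1, y₁, y₁²}`; in particular `y₁³ = y₁·y₂ + y₁·(y₁² - y₂)` and every element is
uniquely `a₀ + a₁y₁ + a₂y₁²` with `aᵢ ∈ A`. -/
theorem BGL2_free_over_BSL3 :
    y₁ ^ 3 = y₁ * y₂ + y₁ * (y₁ ^ 2 - y₂) ∧
    ∀ f : MvPolynomial (Fin 2) ℤ,
      ∃! a : Fin 3 → (Algebra.adjoin ℤ ({y₁ ^ 2 - y₂, y₁ * y₂} : Set (MvPolynomial (Fin 2) ℤ))),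
        f = ∑ i : Fin 3, (a i : MvPolynomial (Fin 2) ℤ) * y₁ ^ (i : ℕ) := by
  constructor
  · ring
  · intro f
    obtain ⟨a, ha, heq⟩ := exists_repr f
    refine ⟨fun i => ⟨a i, ha i⟩, heq, ?_⟩
    intro a' ha'
    funext i
    apply Subtype.ext
    have hz := repr_zero (fun i => (a' i : MvPolynomial (Fin 2) ℤ) - a i)
      (fun i => sub_mem (a' i).2 (ha i)) (by
        simp only [sub_mul]
        rw [Finset.sum_sub_distrib, ← ha', ← heq, sub_self])
    exact sub_eq_zero.mp (hz i)
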